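/- arXiv:2201.04333 — 4 statements merged into one kernel-verified Lean document; each statement's English description precedes it below -/
import Mathlib

section
/- Let H and G be graphs with |V(H)| = n, Δ(H) = Δ, |E(H)| = e_H, |E(G)| = e_G, and δ(G) = δ ≥ 1. Let S be a maximum G-free subset of V(H) with S ≠ V(H), and let e_{H'} be the number of edges of the induced subgraph H[V(H)\S]. Then |S| ≥ n + (e_G + e_{H'} − e_H − Δ)/δ. -/
/-- `CopyIn H G S` means the induced subgraph `H[S]` contains a copy of `G`. -/
def CopyIn {α β : Type} (H : SimpleGraph α) (G : SimpleGraph β) (S : Finset α) : Prop :=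
  ∃ f : β ↪ α, (∀ b, f b ∈ S) ∧ ∀ a b, G.Adj a b → H.Adj (f a) (f b)

section aux
variable {α β : Type} [Fintype α] [DecidableEq α] [Fintype β]
    (H : SimpleGraph α) (G : SimpleGraph β) [DecidableRel H.Adj] [DecidableRel G.Adj]
    (S : Finset α)

-- copy in insert v S for v ∉ S
lemma copy_insert (hmax : ∀ T : Finset α, ¬ CopyIn H G T → T.card ≤ S.card)
    {v : α} (hv : v ∉ S) : CopyIn H G (insert v S) := by
  by_contra h
  have := hmax _ h
  rw [Finset.card_insert_of_notMem hv] at this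
  omega

-- every vertex outside S has ≥ δ neighbors in S
lemma nbrs_lower (hfree : ¬ CopyIn H G S)
    (hmax : ∀ T : Finset α, ¬ CopyIn H G T → T.card ≤ S.card)
    {v : α} (hv : v ∉ S) : G.minDegree ≤ (S.filter (H.Adj v)).card := by
  obtain ⟨f, hfS, hfadj⟩ := copy_insert H G S hmax hv
  have hb : ∃ b, f b = v := by
    by_contra h
    push_neg at h
    exact hfree ⟨f, fun b => (Finset.mem_insert.1 (hfS b)).resolve_left (h b), hfadj⟩
  obtain ⟨b0, hb0⟩ := hb
  have hinj : Set.InjOn f (G.neighborFinset b0) := fun a _ b _ h => f.injective h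
  have hmaps : ∀ a ∈ G.neighborFinset b0, f a ∈ S.filter (H.Adj v) := by
    intro a ha
    rw [SimpleGraph.mem_neighborFinset] at ha
    rw [Finset.mem_filter]
    constructor
    · refine (Finset.mem_insert.1 (hfS a)).resolve_left ?_
      intro h
      exact (G.ne_of_adj ha) (f.injective (hb0.trans h.symm))
    · have := hfadj b0 a ha
      rwa [hb0] at this
  calc G.minDegree ≤ G.degree b0 := G.minDegree_le_degree b0
    _ = (G.neighborFinset b0).card := rfl
    _ ≤ (S.filter (H.Adj v)).card := Finset.card_le_card_of_injOn f hmaps hinj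

-- e_G ≤ e(H[S]) + Δ
lemma eG_bound (hne : S ≠ Finset.univ)
    (hmax : ∀ T : Finset α, ¬ CopyIn H G T → T.card ≤ S.card) :
    G.edgeFinset.card ≤
      (H.edgeFinset.filter (fun e => ∀ x ∈ e, x ∈ S)).card + H.maxDegree := by
  have hv : ∃ v, v ∉ S := by
    by_contra h
    push_neg at h
    exact hne (Finset.eq_univ_iff_forall.2 h)
  obtain ⟨v, hv⟩ := hv
  obtain ⟨f, hfS, hfadj⟩ := copy_insert H G S hmax hv
  have hedge : ∀ e ∈ G.edgeFinset, e.map f ∈ H.edgeFinset := by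
    intro e he
    induction e with
    | _ a b =>
      rw [SimpleGraph.mem_edgeFinset, SimpleGraph.mem_edgeSet] at he
      rw [SimpleGraph.mem_edgeFinset, Sym2.map_pair_eq, SimpleGraph.mem_edgeSet]
      exact hfadj a b he
  have hsplit := Finset.card_filter_add_card_filter_not
    (s := G.edgeFinset) (p := fun e => v ∈ e.map f)
  have h1 : (G.edgeFinset.filter (fun e => v ∈ e.map f)).card ≤ H.maxDegree := by
    calc (G.edgeFinset.filter (fun e => v ∈ e.map f)).card
        ≤ (H.incidenceFinset v).card := by
          apply Finset.card_le_card_of_injOn (Sym2.map f)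
          · intro e he
            rw [Finset.mem_coe, Finset.mem_filter] at he
            rw [Finset.mem_coe, SimpleGraph.mem_incidenceFinset]
            exact ⟨SimpleGraph.mem_edgeFinset.1 (hedge e he.1), he.2⟩
          · exact fun a _ b _ h => Sym2.map.injective f.injective h
      _ = H.degree v := (H.card_incidenceFinset_eq_degree v)
      _ ≤ H.maxDegree := H.degree_le_maxDegree v
  have h2 : (G.edgeFinset.filter (fun e => ¬ v ∈ e.map f)).card ≤
      (H.edgeFinset.filter (fun e => ∀ x ∈ e, x ∈ S)).card := by
    apply Finset.card_le_card_of_injOn (Sym2.map f)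
    · intro e he
      rw [Finset.mem_coe, Finset.mem_filter] at he ⊢
      refine ⟨hedge e he.1, ?_⟩
      intro x hx
      induction e with
      | _ a b =>
        rw [Sym2.map_pair_eq, Sym2.mem_iff] at hx
        have hmem : ∀ c : β, f c ≠ v → f c ∈ S := fun c hc =>
          (Finset.mem_insert.1 (hfS c)).resolve_left hc
        rcases hx with h | h
        · subst h
          exact hmem a (fun hc => he.2 (by rw [Sym2.map_pair_eq, Sym2.mem_iff]; left; exact hc.symm))
        · subst h
          exact hmem b (fun hc => he.2 (by rw [Sym2.map_pair_eq, Sym2.mem_iff]; right; exact hc.symm))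
    · exact fun a _ b _ h => Sym2.map.injective f.injective h
  omega
end aux

-- partition of edges into: both in S / mixed / both outside S
lemma split_card' {α : Type} [Fintype α] [DecidableEq α]
    (H : SimpleGraph α) [DecidableRel H.Adj] (S : Finset α) :
    (H.edgeFinset.filter (fun e => ∀ x ∈ e, x ∈ S)).card
      + (H.edgeFinset.filter (fun e => ¬(∀ x ∈ e, x ∈ S) ∧ ¬(∀ x ∈ e, x ∉ S))).card
      + (H.edgeFinset.filter (fun e => ∀ x ∈ e, x ∉ S)).card = H.edgeFinset.card := by
  classical
  have h1 := Finset.card_filter_add_card_filter_not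
    (s := H.edgeFinset) (p := fun e => ∀ x ∈ e, x ∈ S)
  have h2 := Finset.card_filter_add_card_filter_not
    (s := H.edgeFinset.filter (fun e => ¬(∀ x ∈ e, x ∈ S))) (p := fun e => ∀ x ∈ e, x ∉ S)
  rw [Finset.filter_filter, Finset.filter_filter] at h2
  have h3 : H.edgeFinset.filter (fun e => ¬(∀ x ∈ e, x ∈ S) ∧ (∀ x ∈ e, x ∉ S))
      = H.edgeFinset.filter (fun e => ∀ x ∈ e, x ∉ S) := by
    apply Finset.filter_congr
    intro e _
    constructor
    · exact fun h => h.2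
    · intro hq
      exact ⟨fun hp => (hq _ (Sym2.out_fst_mem e)) (hp _ (Sym2.out_fst_mem e)), hq⟩
  rw [h3] at h2
  omega

-- mixed edges counted by outside endpoints
lemma mixed_card' {α : Type} [Fintype α] [DecidableEq α]
    (H : SimpleGraph α) [DecidableRel H.Adj] (S : Finset α) :
    (H.edgeFinset.filter (fun e => ¬(∀ x ∈ e, x ∈ S) ∧ ¬(∀ x ∈ e, x ∉ S))).card
      = ∑ v ∈ Sᶜ, (S.filter (H.Adj v)).card := by
  classical
  rw [← Finset.card_sigma]
  symm
  apply Finset.card_bij (fun (p : Σ _ : α, α) _ => s(p.1, p.2))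
  · rintro ⟨v, u⟩ hp
    rw [Finset.mem_sigma] at hp
    obtain ⟨hv, hu⟩ := hp
    rw [Finset.mem_compl] at hv
    rw [Finset.mem_filter] at hu
    rw [Finset.mem_filter]
    refine ⟨?_, ?_, ?_⟩
    · rw [SimpleGraph.mem_edgeFinset, SimpleGraph.mem_edgeSet]; exact hu.2
    · intro h
      exact hv (h v (by rw [Sym2.mem_iff]; left; rfl))
    · intro h
      exact (h u (by rw [Sym2.mem_iff]; right; rfl)) hu.1
  · rintro ⟨v, u⟩ hp ⟨v', u'⟩ hp' h
    rw [Finset.mem_sigma, Finset.mem_compl, Finset.mem_filter] at hp hp'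
    simp only [Sym2.eq_iff] at h
    rcases h with ⟨h1, h2⟩ | ⟨h1, h2⟩
    · subst h1; subst h2; rfl
    · exact absurd (h1 ▸ hp'.2.1) (fun hc => hp.1 hc)
  · intro e he
    rw [Finset.mem_filter] at he
    obtain ⟨hE, hnp, hnq⟩ := he
    induction e with
    | _ a b =>
      have hadj : H.Adj a b := by
        rw [SimpleGraph.mem_edgeFinset, SimpleGraph.mem_edgeSet] at hE
        exact hE
      push_neg at hnp hnq
      by_cases ha : a ∈ S
      · have hb : b ∉ S := by
          obtain ⟨x, hx, hxs⟩ := hnp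
          rw [Sym2.mem_iff] at hx
          rcases hx with rfl | rfl
          · exact absurd ha hxs
          · exact hxs
        refine ⟨⟨b, a⟩, ?_, Sym2.eq_swap⟩
        rw [Finset.mem_sigma, Finset.mem_compl, Finset.mem_filter]
        exact ⟨hb, ha, hadj.symm⟩
      · have hb : b ∈ S := by
          obtain ⟨x, hx, hxs⟩ := hnq
          rw [Sym2.mem_iff] at hx
          rcases hx with rfl | rfl
          · exact absurd hxs ha
          · exact hxs
        refine ⟨⟨a, b⟩, ?_, rfl⟩
        rw [Finset.mem_sigma, Finset.mem_compl, Finset.mem_filter]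
        exact ⟨ha, hb, hadj⟩

-- edges inside the complement = edges of the induced subgraph
lemma outside_card' {α : Type} [Fintype α] [DecidableEq α]
    (H : SimpleGraph α) [DecidableRel H.Adj] (S : Finset α) :
    ((H.induce (↑(Sᶜ) : Set α)).edgeFinset).card
      = (H.edgeFinset.filter (fun e => ∀ x ∈ e, x ∉ S)).card := by
  classical
  apply Finset.card_bij (fun e _ => Sym2.map Subtype.val e)
  · intro e he
    rw [SimpleGraph.mem_edgeFinset] at he
    induction e with
    | _ a b =>
      rw [SimpleGraph.mem_edgeSet, SimpleGraph.comap_adj] at he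
      rw [Finset.mem_filter, Sym2.map_pair_eq]
      refine ⟨?_, ?_⟩
      · rw [SimpleGraph.mem_edgeFinset, SimpleGraph.mem_edgeSet]
        exact he
      · intro x hx
        rw [Sym2.mem_iff] at hx
        rcases hx with rfl | rfl
        · exact Finset.mem_compl.1 (Finset.mem_coe.1 a.2)
        · exact Finset.mem_compl.1 (Finset.mem_coe.1 b.2)
  · exact fun a _ b _ h => Sym2.map.injective Subtype.val_injective h
  · intro e he
    rw [Finset.mem_filter] at he
    obtain ⟨hE, hq⟩ := he
    induction e with
    | _ a b =>
      have hadj : H.Adj a b := by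
        rw [SimpleGraph.mem_edgeFinset, SimpleGraph.mem_edgeSet] at hE
        exact hE
      have ha : a ∈ (↑(Sᶜ) : Set α) :=
        Finset.mem_coe.2 (Finset.mem_compl.2 (hq a (by rw [Sym2.mem_iff]; left; rfl)))
      have hb : b ∈ (↑(Sᶜ) : Set α) :=
        Finset.mem_coe.2 (Finset.mem_compl.2 (hq b (by rw [Sym2.mem_iff]; right; rfl)))
      refine ⟨s((⟨a, ha⟩ : ↥(↑(Sᶜ) : Set α)), (⟨b, hb⟩ : ↥(↑(Sᶜ) : Set α))), ?_, by rw [Sym2.map_pair_eq]⟩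
      rw [SimpleGraph.mem_edgeFinset, SimpleGraph.mem_edgeSet, SimpleGraph.comap_adj]
      exact hadj


/-- Theorem: with `n = |V(H)|`, `Δ = Δ(H)`, `e_H = |E(H)|`, `e_G = |E(G)|`,
`δ = δ(G) ≥ 1`, and `S` a maximum `G`-free subset of `V(H)` with `S ≠ V(H)`,
and `e_{H'}` the number of edges of `H[V(H)\S]`, we have
`|S| ≥ n + (e_G + e_{H'} − e_H − Δ)/δ`. -/
theorem stmt_2 {α β : Type} [Fintype α] [DecidableEq α] [Fintype β]
    (H : SimpleGraph α) (G : SimpleGraph β) [DecidableRel H.Adj] [DecidableRel G.Adj]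
    (S : Finset α)
    (hfree : ¬ CopyIn H G S)
    (hmax : ∀ T : Finset α, ¬ CopyIn H G T → T.card ≤ S.card)
    (hδ : 1 ≤ G.minDegree) (hne : S ≠ Finset.univ) :
    (S.card : ℚ) ≥ (Fintype.card α : ℚ) +
      ((G.edgeFinset.card : ℚ) + ((H.induce (↑(Sᶜ) : Set α)).edgeFinset.card : ℚ)
        - (H.edgeFinset.card : ℚ) - (H.maxDegree : ℚ)) / (G.minDegree : ℚ) := by
  classical
  set n := Fintype.card α
  set d := G.minDegree with hd
  have hδQ : (0 : ℚ) < d := by exact_mod_cast hδ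
  have hsplit := split_card' H S
  have hmixed := mixed_card' H S
  have hout := outside_card' H S
  set eS := (H.edgeFinset.filter (fun e => ∀ x ∈ e, x ∈ S)).card with heS
  set eM := (H.edgeFinset.filter (fun e => ¬(∀ x ∈ e, x ∈ S) ∧ ¬(∀ x ∈ e, x ∉ S))).card
  set e0 := (H.edgeFinset.filter (fun e => ∀ x ∈ e, x ∉ S)).card
  have hD := eG_bound H G S hne hmax
  have hA : Sᶜ.card * d ≤ eM := by
    rw [hmixed]
    have := Finset.card_nsmul_le_sum Sᶜ (fun v => (S.filter (H.Adj v)).card) d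
      (fun v hv => nbrs_lower H G S hfree hmax (Finset.mem_compl.1 hv))
    simpa using this
  have hcompl : (Sᶜ.card : ℚ) = (n : ℚ) - S.card := by
    rw [Finset.card_compl]
    push_cast [Nat.cast_sub (Finset.card_le_univ S)]
    ring
  have hAq : (Sᶜ.card : ℚ) * d ≤ (eM : ℚ) := by exact_mod_cast hA
  have hBq : (eS : ℚ) + eM + e0 = H.edgeFinset.card := by exact_mod_cast hsplit
  have hDq : (G.edgeFinset.card : ℚ) ≤ (eS : ℚ) + H.maxDegree := by exact_mod_cast hD
  rw [ge_iff_le, hout, ← sub_nonneg]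
  have key : ((G.edgeFinset.card : ℚ) + (e0 : ℚ) - (H.edgeFinset.card : ℚ)
      - (H.maxDegree : ℚ)) / (d : ℚ) ≤ -(Sᶜ.card : ℚ) := by
    rw [div_le_iff₀ hδQ, neg_mul]
    nlinarith [hAq, hBq, hDq]
  linarith [key, hcompl]
end

section
/- Let H and G be graphs with δ(G) = δ ≥ 1, and let S be a maximum G-free subset of V(H). Fix a δ-element subset X ⊆ S and define Y = {w ∈ V(H)\S : N(w) ∩ S = X}. Then H[Y] is a clique: any two distinct vertices of Y are adjacent in H. -/
/-- Let `S` be a maximum `G`-free subset of `V(H)` with `δ = δ(G) ≥ 1`.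
For a fixed `δ`-element subset `X ⊆ S`, let `Y = {w ∈ V(H)\S : N(w) ∩ S = X}`.
Then `H[Y]` is a clique: any two distinct vertices of `Y` are adjacent in `H`. -/
theorem stmt_6 {α β : Type} [Fintype α] [DecidableEq α] [Fintype β]
    (H : SimpleGraph α) (G : SimpleGraph β) [DecidableRel H.Adj] [DecidableRel G.Adj]
    (S : Finset α)
    (hfree : ¬ CopyIn H G S)
    (hmax : ∀ T : Finset α, ¬ CopyIn H G T → T.card ≤ S.card)
    (hδ : 1 ≤ G.minDegree)
    (X : Finset α) (hXS : X ⊆ S) (hXcard : X.card = G.minDegree)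
    (Y : Finset α) (hY : Y = (Sᶜ).filter fun w => H.neighborFinset w ∩ S = X) :
    ∀ x ∈ Y, ∀ x' ∈ Y, x ≠ x' → H.Adj x x' := by
  intro x hx x' hx' hne
  by_contra hadj
  subst hY
  simp only [Finset.mem_filter, Finset.mem_compl] at hx hx'
  obtain ⟨hxS, hxN⟩ := hx
  obtain ⟨hx'S, hx'N⟩ := hx'
  obtain ⟨v, hv⟩ : X.Nonempty := Finset.card_pos.mp (by omega)
  set T := insert x (insert x' (S.erase v)) with hT
  have hvS : v ∈ S := hXS hv
  have hcard : S.card < T.card := by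
    have he : (S.erase v).card = S.card - 1 := Finset.card_erase_of_mem hvS
    have hx'T : x' ∉ S.erase v := fun h => hx'S (Finset.mem_of_mem_erase h)
    have hxT : x ∉ insert x' (S.erase v) := by
      simp only [Finset.mem_insert]
      push_neg
      exact ⟨hne, fun h => hxS (Finset.mem_of_mem_erase h)⟩
    rw [hT, Finset.card_insert_of_notMem hxT, Finset.card_insert_of_notMem hx'T, he]
    have : 1 ≤ S.card := Finset.card_pos.mpr ⟨v, hvS⟩
    omega
  have hTfree : ¬ CopyIn H G T := by
    rintro ⟨f, hfT, hfadj⟩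
    have key : ∀ z, (z = x ∨ z = x') → ∀ b, f b ≠ z := by
      intro z hz b hb
      have hdeg : G.minDegree ≤ G.degree b := G.minDegree_le_degree b
      have hinj : ∀ a ∈ G.neighborFinset b, f a ∈ X.erase v := by
        intro a ha
        rw [SimpleGraph.mem_neighborFinset] at ha
        have hadj' : H.Adj z (f a) := hb ▸ hfadj b a ha
        have hfa : f a ∈ T := hfT a
        have h1 : f a ≠ x := by
          rintro rfl
          rcases hz with rfl | rfl
          · exact H.irrefl hadj'
          · exact hadj hadj'.symm
        have h2 : f a ≠ x' := by
          rintro rfl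
          rcases hz with rfl | rfl
          · exact hadj hadj'
          · exact H.irrefl hadj'
        have hfaS : f a ∈ S.erase v := by
          rcases Finset.mem_insert.mp hfa with h | h
          · exact absurd h h1
          rcases Finset.mem_insert.mp h with h | h
          · exact absurd h h2
          · exact h
        have hfaX : f a ∈ X := by
          rcases hz with rfl | rfl
          · rw [← hxN]
            exact Finset.mem_inter.mpr ⟨(SimpleGraph.mem_neighborFinset _ _ _).mpr hadj',
              Finset.mem_of_mem_erase hfaS⟩
          · rw [← hx'N]
            exact Finset.mem_inter.mpr ⟨(SimpleGraph.mem_neighborFinset _ _ _).mpr hadj',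
              Finset.mem_of_mem_erase hfaS⟩
        exact Finset.mem_erase.mpr ⟨Finset.ne_of_mem_erase hfaS, hfaX⟩
      have hle : (G.neighborFinset b).card ≤ (X.erase v).card :=
        Finset.card_le_card_of_injOn f hinj (fun a _ a' _ h => f.injective h)
      rw [SimpleGraph.card_neighborFinset_eq_degree] at hle
      rw [Finset.card_erase_of_mem hv, hXcard] at hle
      omega
    refine hfree ⟨f, fun b => ?_, hfadj⟩
    have hb := hfT b
    rcases Finset.mem_insert.mp hb with h | h
    · exact absurd h (key x (Or.inl rfl) b)
    rcases Finset.mem_insert.mp h with h | h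
    · exact absurd h (key x' (Or.inr rfl) b)
    · exact Finset.mem_of_mem_erase h
  exact absurd (hmax T hTfree) (by omega)
end

section
/- Let H be a graph on n vertices and let p be a positive integer such that for every clique K in H there exists a vertex v ∈ V(K) with deg_H(v) ≤ p − |V(K)| − 1. Then the independence number α(H) satisfies α(H) ≥ 2n/p. -/
/-- A finset of vertices is independent if no two of its members are adjacent. -/
def IsIndepSet {α : Type} (H : SimpleGraph α) (S : Finset α) : Prop :=
  ∀ ⦃u⦄, u ∈ S → ∀ ⦃v⦄, v ∈ S → u ≠ v → ¬ H.Adj u v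

/-- The independence number `α(H)`: the largest size of an independent set. -/
noncomputable def indepNum {α : Type} [Fintype α] (H : SimpleGraph α) : ℕ :=
  sSup {n | ∃ S : Finset α, IsIndepSet H S ∧ S.card = n}

/-- (Henning et al.) If `H` is a graph on `n` vertices and `p` a positive integer such
that every (nonempty) clique `K` of `H` has a vertex `v` with `deg_H(v) ≤ p − |K| − 1`,
then `α(H) ≥ 2n/p`. -/
theorem stmt_7 {α : Type} [Fintype α] [DecidableEq α]
    (H : SimpleGraph α) [DecidableRel H.Adj] (n p : ℕ)
    (hn : Fintype.card α = n) (hp : 0 < p)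
    (hcl : ∀ K : Finset α, H.IsClique ↑K → K.Nonempty →
      ∃ v ∈ K, (H.degree v : ℤ) ≤ (p : ℤ) - (K.card : ℤ) - 1) :
    (indepNum H : ℚ) ≥ 2 * (n : ℚ) / (p : ℚ) := by
  classical
  -- the defining set of `indepNum` is nonempty and bounded above
  have hbdd : BddAbove {m | ∃ S : Finset α, IsIndepSet H S ∧ S.card = m} := by
    refine ⟨Fintype.card α, ?_⟩
    rintro m ⟨S, -, rfl⟩
    exact S.card_le_univ
  have hub : ∀ T : Finset α, IsIndepSet H T → T.card ≤ indepNum H := by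
    intro T hT
    exact le_csSup hbdd ⟨T, hT, rfl⟩
  have hne : {m | ∃ S : Finset α, IsIndepSet H S ∧ S.card = m}.Nonempty := by
    refine ⟨0, ∅, ?_, Finset.card_empty⟩
    intro u hu
    simp at hu
  have hmem : ∃ S : Finset α, IsIndepSet H S ∧ S.card = indepNum H :=
    Nat.sSup_mem hne hbdd
  obtain ⟨S0, hS0i, hS0c⟩ := hmem
  -- choose a maximum independent set `S` minimizing the degree sum
  set F : Finset (Finset α) :=
    Finset.univ.filter (fun S => IsIndepSet H S ∧ S.card = indepNum H) with hF
  obtain ⟨S, hSF, hSmin⟩ := Finset.exists_min_image (s := F)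
    (fun S => ∑ v ∈ S, H.degree v) ⟨S0, by simp [hF, hS0i, hS0c]⟩
  rw [hF, Finset.mem_filter] at hSF
  obtain ⟨-, hSi, hSc⟩ := hSF
  -- every vertex outside S has a neighbor in S
  have hdom : ∀ u, u ∉ S → ∃ s ∈ S, H.Adj u s := by
    intro u hu
    by_contra hcon
    push_neg at hcon
    have hind : IsIndepSet H (insert u S) := by
      intro a ha b hb hab
      rcases Finset.mem_insert.mp ha with rfl | ha' <;>
        rcases Finset.mem_insert.mp hb with rfl | hb'
      · exact absurd rfl hab
      · exact hcon b hb'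
      · exact fun h => hcon a ha' h.symm
      · exact hSi ha' hb' hab
    have := hub _ hind
    rw [Finset.card_insert_of_notMem hu, hSc] at this
    omega
  -- private neighbors of s
  set Ps : α → Finset α :=
    fun s => Finset.univ.filter (fun u => u ∉ S ∧ H.neighborFinset u ∩ S = {s}) with hPs
  have hPmem : ∀ s u, u ∈ Ps s ↔ u ∉ S ∧ H.neighborFinset u ∩ S = {s} := by
    intro s u; simp [hPs]
  have hPadj : ∀ s u, u ∈ Ps s → ∀ t ∈ S, H.Adj u t → t = s := by
    intro s u hu t ht hadj
    have h1 : t ∈ H.neighborFinset u ∩ S :=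
      Finset.mem_inter.mpr ⟨(H.mem_neighborFinset u t).mpr hadj, ht⟩
    rw [((hPmem s u).mp hu).2] at h1
    exact Finset.mem_singleton.mp h1
  have hPadjs : ∀ s ∈ S, ∀ u ∈ Ps s, H.Adj u s := by
    intro s hs u hu
    have h2 := ((hPmem s u).mp hu).2
    have h3 : s ∈ H.neighborFinset u ∩ S := by
      rw [h2]; exact Finset.mem_singleton_self s
    exact (H.mem_neighborFinset u s).mp (Finset.mem_inter.mp h3).1
  -- {s} ∪ P(s) is a clique
  have hclq : ∀ s ∈ S, H.IsClique ↑(insert s (Ps s)) := by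
    intro s hs a ha b hb hab
    simp only [Finset.coe_insert, Set.mem_insert_iff, Finset.mem_coe] at ha hb
    rcases ha with rfl | ha' <;> rcases hb with rfl | hb'
    · exact absurd rfl hab
    · exact (hPadjs _ hs b hb').symm
    · exact hPadjs _ hs a ha'
    · by_contra hna
      have haS := ((hPmem s a).mp ha').1
      have hbS := ((hPmem s b).mp hb').1
      have herase : ∀ c, c ∈ Ps s → ∀ t ∈ S.erase s, ¬ H.Adj c t := by
        intro c hc t ht hadj
        exact (Finset.ne_of_mem_erase ht) (hPadj s c hc t (Finset.mem_of_mem_erase ht) hadj)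
      have hind : IsIndepSet H (insert a (insert b (S.erase s))) := by
        intro x hx y hy hxy
        rcases Finset.mem_insert.mp hx with rfl | hx'' <;>
          rcases Finset.mem_insert.mp hy with rfl | hy''
        · exact absurd rfl hxy
        · rcases Finset.mem_insert.mp hy'' with rfl | hy3
          · exact hna
          · exact herase _ ha' _ hy3
        · rcases Finset.mem_insert.mp hx'' with rfl | hx3
          · exact fun h => hna h.symm
          · exact fun h => herase _ ha' _ hx3 h.symm
        · rcases Finset.mem_insert.mp hx'' with rfl | hx3 <;>
            rcases Finset.mem_insert.mp hy'' with rfl | hy3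
          · exact absurd rfl hxy
          · exact herase _ hb' _ hy3
          · exact fun h => herase _ hb' _ hx3 h.symm
          · exact hSi (Finset.mem_of_mem_erase hx3) (Finset.mem_of_mem_erase hy3) hxy
      have h1 : b ∉ S.erase s := fun h => hbS (Finset.mem_of_mem_erase h)
      have h2 : a ∉ insert b (S.erase s) := by
        simp only [Finset.mem_insert]
        rintro (rfl | h)
        · exact hab rfl
        · exact haS (Finset.mem_of_mem_erase h)
      have hcard : (insert a (insert b (S.erase s))).card = S.card + 1 := by
        rw [Finset.card_insert_of_notMem h2, Finset.card_insert_of_notMem h1,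
          Finset.card_erase_of_mem hs]
        have : 0 < S.card := Finset.card_pos.mpr ⟨s, hs⟩
        omega
      have := hub _ hind
      rw [hcard, hSc] at this
      omega
  -- every s ∈ S satisfies deg s ≤ p - |K_s| - 1 (via swapping with the special vertex)
  have hdeg : ∀ s ∈ S, (H.degree s : ℤ) ≤ (p : ℤ) - ((insert s (Ps s)).card : ℤ) - 1 := by
    intro s hs
    obtain ⟨v, hvK, hvd⟩ := hcl _ (hclq s hs) ⟨s, Finset.mem_insert_self _ _⟩
    rcases Finset.mem_insert.mp hvK with rfl | hvP
    · exact hvd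
    · have hvS := ((hPmem s v).mp hvP).1
      have hvnotin : v ∉ S.erase s := fun h => hvS (Finset.mem_of_mem_erase h)
      have hind : IsIndepSet H (insert v (S.erase s)) := by
        intro x hx y hy hxy
        rcases Finset.mem_insert.mp hx with rfl | hx' <;>
          rcases Finset.mem_insert.mp hy with rfl | hy'
        · exact absurd rfl hxy
        · exact fun h => (Finset.ne_of_mem_erase hy')
            (hPadj s _ hvP _ (Finset.mem_of_mem_erase hy') h)
        · exact fun h => (Finset.ne_of_mem_erase hx')
            (hPadj s _ hvP _ (Finset.mem_of_mem_erase hx') h.symm)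
        · exact hSi (Finset.mem_of_mem_erase hx') (Finset.mem_of_mem_erase hy') hxy
      have hcard : (insert v (S.erase s)).card = S.card := by
        rw [Finset.card_insert_of_notMem hvnotin, Finset.card_erase_of_mem hs]
        have : 0 < S.card := Finset.card_pos.mpr ⟨s, hs⟩
        omega
      have hmemF : insert v (S.erase s) ∈ F := by
        rw [hF, Finset.mem_filter]
        exact ⟨Finset.mem_univ _, hind, by rw [hcard, hSc]⟩
      have hmin := hSmin _ hmemF
      rw [Finset.sum_insert hvnotin] at hmin
      have hsum : ∑ x ∈ S.erase s, H.degree x + H.degree s = ∑ x ∈ S, H.degree x :=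
        Finset.sum_erase_add S _ hs
      have hds : H.degree s ≤ H.degree v := by omega
      calc (H.degree s : ℤ) ≤ (H.degree v : ℤ) := by exact_mod_cast hds
        _ ≤ _ := hvd
  -- the complement T
  set T : Finset α := Finset.univ \ S with hT
  have hTmem : ∀ u, u ∈ T ↔ u ∉ S := by intro u; simp [hT]
  have hnST : S.card + T.card = n := by
    rw [hT, Finset.card_sdiff_of_subset (Finset.subset_univ S), ← hn, Finset.card_univ]
    have : S.card ≤ Fintype.card α := S.card_le_univ
    omega
  -- degree sum double counting
  have hNsub : ∀ s ∈ S, H.neighborFinset s ∩ T = H.neighborFinset s := by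
    intro s hs
    apply Finset.inter_eq_left.mpr
    intro u hu
    rw [hTmem]
    intro huS
    have hadj := (H.mem_neighborFinset s u).mp hu
    exact hSi hs huS (H.ne_of_adj hadj) hadj
  have hdeg_eq : ∀ s ∈ S, H.degree s = ∑ u ∈ T, (if H.Adj s u then 1 else 0) := by
    intro s hs
    have h1 : H.neighborFinset s ∩ T = T.filter (fun u => H.Adj s u) := by
      ext u
      simp [SimpleGraph.mem_neighborFinset, Finset.mem_filter, and_comm]
    have h2 : H.degree s = (H.neighborFinset s ∩ T).card := by
      rw [hNsub s hs]; rfl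
    rw [h2, h1, Finset.card_filter]
  have hcard_inter : ∀ u, (H.neighborFinset u ∩ S).card
      = ∑ s ∈ S, (if H.Adj s u then 1 else 0) := by
    intro u
    have h1 : H.neighborFinset u ∩ S = S.filter (fun s => H.Adj u s) := by
      ext s
      simp [SimpleGraph.mem_neighborFinset, and_comm]
    rw [h1, Finset.card_filter]
    exact Finset.sum_congr rfl fun s _ => if_congr (H.adj_comm u s) rfl rfl
  have hsum1 : ∑ s ∈ S, H.degree s = ∑ u ∈ T, (H.neighborFinset u ∩ S).card := by
    calc ∑ s ∈ S, H.degree s = ∑ s ∈ S, ∑ u ∈ T, (if H.Adj s u then 1 else 0) :=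
          Finset.sum_congr rfl hdeg_eq
      _ = ∑ u ∈ T, ∑ s ∈ S, (if H.Adj s u then 1 else 0) := Finset.sum_comm
      _ = ∑ u ∈ T, (H.neighborFinset u ∩ S).card :=
          Finset.sum_congr rfl fun u _ => (hcard_inter u).symm
  -- private-neighbor sum double counting
  have hPs_eq : ∀ s, Ps s = T.filter (fun u => H.neighborFinset u ∩ S = {s}) := by
    intro s
    ext u
    simp [hPs, hT, Finset.mem_sdiff, and_comm]
  have hsum2 : ∑ s ∈ S, (Ps s).card
      = ∑ u ∈ T, (S.filter (fun s => H.neighborFinset u ∩ S = {s})).card := by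
    calc ∑ s ∈ S, (Ps s).card
        = ∑ s ∈ S, ∑ u ∈ T, (if H.neighborFinset u ∩ S = {s} then 1 else 0) := by
          refine Finset.sum_congr rfl fun s _ => ?_
          rw [hPs_eq s, Finset.card_filter]
      _ = ∑ u ∈ T, ∑ s ∈ S, (if H.neighborFinset u ∩ S = {s} then 1 else 0) :=
          Finset.sum_comm
      _ = _ := Finset.sum_congr rfl fun u _ => (Finset.card_filter _ _).symm
  -- pointwise bound for vertices outside S
  have hkey : ∀ u ∈ T, 2 ≤ (H.neighborFinset u ∩ S).card
      + (S.filter (fun s => H.neighborFinset u ∩ S = {s})).card := by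
    intro u hu
    obtain ⟨s, hs, hadj⟩ := hdom u ((hTmem u).mp hu)
    have hmem1 : s ∈ H.neighborFinset u ∩ S :=
      Finset.mem_inter.mpr ⟨(H.mem_neighborFinset u s).mpr hadj, hs⟩
    have h1 : 1 ≤ (H.neighborFinset u ∩ S).card := Finset.card_pos.mpr ⟨s, hmem1⟩
    rcases eq_or_lt_of_le h1 with heq | hlt
    · obtain ⟨s0, hs0⟩ := Finset.card_eq_one.mp heq.symm
      have hs0S : s0 ∈ S := by
        have h3 : s0 ∈ H.neighborFinset u ∩ S := by
          rw [hs0]; exact Finset.mem_singleton_self _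
        exact (Finset.mem_inter.mp h3).2
      have h4 : 1 ≤ (S.filter (fun s => H.neighborFinset u ∩ S = {s})).card :=
        Finset.card_pos.mpr ⟨s0, Finset.mem_filter.mpr ⟨hs0S, hs0⟩⟩
      omega
    · omega
  -- per-vertex bound in ℕ
  have hterm : ∀ s ∈ S, H.degree s + ((Ps s).card + 2) ≤ p := by
    intro s hs
    have h := hdeg s hs
    have hk : (insert s (Ps s)).card = (Ps s).card + 1 := by
      rw [Finset.card_insert_of_notMem]
      intro hmem
      exact ((hPmem s s).mp hmem).1 hs
    omega
  -- put everything together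
  have h2T : 2 * T.card ≤ ∑ s ∈ S, H.degree s + ∑ s ∈ S, (Ps s).card := by
    rw [hsum1, hsum2, ← Finset.sum_add_distrib]
    calc 2 * T.card = ∑ _u ∈ T, 2 := by rw [Finset.sum_const, smul_eq_mul, mul_comm]
      _ ≤ _ := Finset.sum_le_sum hkey
  have hS2 : ∑ s ∈ S, (H.degree s + ((Ps s).card + 2)) ≤ S.card * p := by
    calc ∑ s ∈ S, (H.degree s + ((Ps s).card + 2)) ≤ ∑ _s ∈ S, p :=
          Finset.sum_le_sum hterm
      _ = S.card * p := by rw [Finset.sum_const, smul_eq_mul]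
  have e1 : ∑ s ∈ S, (H.degree s + ((Ps s).card + 2))
      = ∑ s ∈ S, H.degree s + (∑ s ∈ S, (Ps s).card + S.card * 2) := by
    rw [Finset.sum_add_distrib, Finset.sum_add_distrib, Finset.sum_const, smul_eq_mul]
  have hfinal : 2 * n ≤ indepNum H * p := by
    rw [← hSc]
    rw [e1] at hS2
    linarith [hnST, h2T, hS2]
  rw [ge_iff_le, div_le_iff₀ (by exact_mod_cast hp : (0:ℚ) < p)]
  exact_mod_cast hfinal
end

section
/- Let H be a graph on n vertices with maximum degree Δ ≥ 1 and G a graph on at most n vertices with minimum degree δ ≥ 1. If S is a maximum G-free subset of V(H), then the number of edges of H satisfies e(H) ≥ δ·(n − |S|) + e(H[V(H)\S]) + (e(G) − Δ) whenever S ≠ V(H). -/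
/-- Let `H` be a graph on `n` vertices with maximum degree `Δ ≥ 1`, and `G` a graph
on at most `n` vertices with minimum degree `δ ≥ 1`.  If `S` is a maximum `G`-free
subset of `V(H)` with `S ≠ V(H)`, then
`e(H) ≥ δ·(n − |S|) + e(H[V(H)\S]) + (e(G) − Δ)`. -/
theorem stmt_17 {α β : Type} [Fintype α] [DecidableEq α] [Fintype β]
    (H : SimpleGraph α) (G : SimpleGraph β) [DecidableRel H.Adj] [DecidableRel G.Adj]
    (hΔ : 1 ≤ H.maxDegree) (hδ : 1 ≤ G.minDegree)
    (hcard : Fintype.card β ≤ Fintype.card α)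
    (S : Finset α)
    (hfree : ¬ CopyIn H G S)
    (hmax : ∀ T : Finset α, ¬ CopyIn H G T → T.card ≤ S.card)
    (hne : S ≠ Finset.univ) :
    (H.edgeFinset.card : ℤ) ≥
      (G.minDegree : ℤ) * ((Fintype.card α : ℤ) - (S.card : ℤ)) +
        ((H.induce (↑(Sᶜ) : Set α)).edgeFinset.card : ℤ) +
        ((G.edgeFinset.card : ℤ) - (H.maxDegree : ℤ)) := by
  classical
  obtain ⟨v0, hv0⟩ : ∃ v, v ∉ S := by
    by_contra h
    push_neg at h
    exact hne (Finset.eq_univ_iff_forall.mpr h)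
  -- every vertex outside S gives a copy in `insert v S`
  have hcopy : ∀ v ∉ S, CopyIn H G (insert v S) := by
    intro v hv
    by_contra hc
    have := hmax _ hc
    rw [Finset.card_insert_of_notMem hv] at this
    omega
  -- every vertex outside `S` has at least `δ` neighbours inside `S`
  have hnbr : ∀ v ∉ S, G.minDegree ≤ ((H.neighborFinset v) ∩ S).card := by
    intro v hv
    obtain ⟨f, hfS, hfadj⟩ := hcopy v hv
    obtain ⟨b0, hb0⟩ : ∃ b, f b = v := by
      by_contra h
      push_neg at h
      refine hfree ⟨f, fun b => ?_, hfadj⟩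
      have := hfS b
      rw [Finset.mem_insert] at this
      exact this.resolve_left (h b)
    have hle : (G.neighborFinset b0).card ≤ ((H.neighborFinset v) ∩ S).card := by
      apply Finset.card_le_card_of_injOn f
      · intro u hu
        rw [Finset.mem_coe, SimpleGraph.mem_neighborFinset] at hu
        have hadj : H.Adj v (f u) := hb0 ▸ hfadj b0 u hu
        have hmem : f u ∈ insert v S := hfS u
        have hne' : f u ≠ v := fun h => H.loopless.irrefl v (h ▸ hadj)
        rw [Finset.mem_coe, Finset.mem_inter, SimpleGraph.mem_neighborFinset]
        exact ⟨hadj, (Finset.mem_insert.mp hmem).resolve_left hne'⟩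
      · exact fun a _ b _ h => f.injective h
    calc G.minDegree ≤ G.degree b0 := G.minDegree_le_degree b0
      _ = (G.neighborFinset b0).card := (G.card_neighborFinset_eq_degree b0).symm
      _ ≤ _ := hle
  set E := H.edgeFinset with hE
  set P : Sym2 α → Prop := fun e => ∀ x ∈ e, x ∈ S with hP
  set Q : Sym2 α → Prop := fun e => ∀ x ∈ e, x ∉ S with hQ
  set A := E.filter P with hA
  set B := E.filter (fun e => ¬ P e ∧ Q e) with hB
  set C := E.filter (fun e => ¬ P e ∧ ¬ Q e) with hC
  -- edge count decomposition
  have hsplit : E.card = A.card + B.card + C.card := by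
    have h1 := Finset.card_filter_add_card_filter_not (s := E) (p := P)
    have h2 := Finset.card_filter_add_card_filter_not
      (s := E.filter (fun e => ¬ P e)) (p := Q)
    rw [← hA] at h1
    rw [Finset.filter_filter, Finset.filter_filter, ← hB, ← hC] at h2
    omega
  -- bound on C
  have hCbound : G.minDegree * Sᶜ.card ≤ C.card := by
    have hTcard : G.minDegree * Sᶜ.card ≤ (Sᶜ.sigma (fun v => H.neighborFinset v ∩ S)).card := by
      rw [Finset.card_sigma, mul_comm]
      calc Sᶜ.card * G.minDegree = ∑ _v ∈ Sᶜ, G.minDegree := by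
            rw [Finset.sum_const, smul_eq_mul]
        _ ≤ _ := Finset.sum_le_sum (fun v hv => hnbr v (Finset.mem_compl.mp hv))
    refine le_trans hTcard (Finset.card_le_card_of_injOn (fun p => s(p.1, p.2)) ?_ ?_)
    · rintro ⟨v, u⟩ hp
      rw [Finset.mem_coe, Finset.mem_sigma, Finset.mem_compl, Finset.mem_inter,
        SimpleGraph.mem_neighborFinset] at hp
      obtain ⟨hvS, hadj, huS⟩ := hp
      rw [hC, Finset.mem_coe, Finset.mem_filter]
      refine ⟨SimpleGraph.mem_edgeFinset.mpr hadj, fun h => hvS (h v (by simp)), fun h => h u (by simp) huS⟩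
    · rintro ⟨v, u⟩ hp ⟨v', u'⟩ hp' h
      simp only [Finset.mem_coe, Finset.mem_sigma, Finset.mem_compl, Finset.mem_inter] at hp hp'
      simp only [Sym2.eq, Sym2.rel_iff', Prod.mk.injEq, Prod.swap_prod_mk] at h
      rcases h with ⟨h1, h2⟩ | ⟨h1, h2⟩
      · simp [h1, h2]
      · exfalso
        exact hp.1 (h1 ▸ hp'.2.2)
  -- bound on B
  have hBbound : (H.induce (↑(Sᶜ) : Set α)).edgeFinset.card ≤ B.card := by
    apply Finset.card_le_card_of_injOn (Sym2.map Subtype.val)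
    · intro e he
      induction e with
      | h x y =>
        rw [Finset.mem_coe, SimpleGraph.mem_edgeFinset, SimpleGraph.mem_edgeSet] at he
        have hadj : H.Adj x.1 y.1 := he
        rw [hB, Finset.mem_coe, Finset.mem_filter]
        refine ⟨SimpleGraph.mem_edgeFinset.mpr hadj, ?_, ?_⟩
        · intro h
          have hx : (x : α) ∈ S := h x.1 (by simp [Sym2.map_pair_eq])
          have hx' := x.2
          simp only [Finset.coe_compl, Set.mem_compl_iff, Finset.mem_coe] at hx'
          exact hx' hx
        · intro z hz
          simp only [Sym2.map_pair_eq, Sym2.mem_iff] at hz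
          rcases hz with rfl | rfl
          · have := x.2
            simpa only [Finset.coe_compl, Set.mem_compl_iff, Finset.mem_coe] using this
          · have := y.2
            simpa only [Finset.coe_compl, Set.mem_compl_iff, Finset.mem_coe] using this
    · intro e _ e' _ h
      exact Sym2.map.injective Subtype.val_injective h
  -- bound on A
  have hAbound : G.edgeFinset.card ≤ A.card + H.maxDegree := by
    obtain ⟨f, hfS, hfadj⟩ := hcopy v0 hv0
    set D := E.filter (fun e => ∀ x ∈ e, x ∈ insert v0 S) with hD
    have h1 : G.edgeFinset.card ≤ D.card := by
      apply Finset.card_le_card_of_injOn (Sym2.map f)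
      · intro e he
        induction e with
        | h x y =>
          rw [Finset.mem_coe, SimpleGraph.mem_edgeFinset, SimpleGraph.mem_edgeSet] at he
          rw [hD, Finset.mem_coe, Finset.mem_filter]
          refine ⟨SimpleGraph.mem_edgeFinset.mpr (hfadj x y he), ?_⟩
          intro z hz
          simp only [Sym2.map_pair_eq, Sym2.mem_iff] at hz
          rcases hz with rfl | rfl
          · exact hfS x
          · exact hfS y
      · intro e _ e' _ h
        exact Sym2.map.injective f.injective h
    have h2 : D ⊆ A ∪ H.incidenceFinset v0 := by
      intro e he
      rw [hD, Finset.mem_filter] at he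
      rw [Finset.mem_union]
      by_cases hPe : P e
      · exact Or.inl (Finset.mem_filter.mpr ⟨he.1, hPe⟩)
      · right
        have hPe' : ∃ x ∈ e, x ∉ S := by
          by_contra hc
          push_neg at hc
          exact hPe hc
        obtain ⟨x, hx, hxS⟩ := hPe'
        have : x = v0 := (Finset.mem_insert.mp (he.2 x hx)).resolve_right hxS
        rw [SimpleGraph.mem_incidenceFinset]
        exact ⟨SimpleGraph.mem_edgeFinset.mp he.1, this ▸ hx⟩
    calc G.edgeFinset.card ≤ D.card := h1
      _ ≤ (A ∪ H.incidenceFinset v0).card := Finset.card_le_card h2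
      _ ≤ A.card + (H.incidenceFinset v0).card := Finset.card_union_le _ _
      _ = A.card + H.degree v0 := by rw [SimpleGraph.card_incidenceFinset_eq_degree]
      _ ≤ A.card + H.maxDegree := by
          have := H.degree_le_maxDegree v0
          omega
  -- final arithmetic
  have hScompl : (Sᶜ.card : ℤ) = (Fintype.card α : ℤ) - (S.card : ℤ) := by
    rw [Finset.card_compl]
    have := Finset.card_le_univ S
    push_cast [Nat.cast_sub (by simpa using this)]
    ring
  have hC' : (G.minDegree : ℤ) * (Sᶜ.card : ℤ) ≤ (C.card : ℤ) := by exact_mod_cast hCbound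
  have hB' : ((H.induce (↑(Sᶜ) : Set α)).edgeFinset.card : ℤ) ≤ (B.card : ℤ) := by
    exact_mod_cast hBbound
  have hA' : (G.edgeFinset.card : ℤ) ≤ (A.card : ℤ) + (H.maxDegree : ℤ) := by
    exact_mod_cast hAbound
  have hsplit' : (E.card : ℤ) = (A.card : ℤ) + (B.card : ℤ) + (C.card : ℤ) := by
    exact_mod_cast hsplit
  rw [hE] at hsplit'
  rw [← hScompl] at *
  linarith [hsplit']
end
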